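/- Primal optimality of the Schrödinger bridge: let μ = (μ_1,…,μ_N) with μ_i ∈ L^∞(X_i,m_i) and let φ be a tuple of essentially bounded measurable functions with T_i(φ) = μ_i m_i-a.e. for every i; set γ(x) := K(x) exp(Σ_{j=1}^N φ_j(x_j)). Then for every probability-proportional measure q on X of the form q = ρ m with ρ ≥ 0 measurable, such that for each i the i-th marginal of q equals μ_i m_i, one has ∫_X (log(ρ(x)/K(x)) − 1) ρ(x) dm(x) ≥ ∫_X (log(γ(x)/K(x)) − 1) γ(x) dm(x) (with the left side interpreted as +∞ when the integral is not defined); i.e. q = γ m minimizes the relative entropy H(·|Km) over all measures with marginals μ_i m_i. -/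

import Mathlib

open MeasureTheory Filter
open scoped ENNReal

noncomputable section

/-- The density kernel `γ_φ(x) = K(x) exp(∑_j φ_j(x_j))`. -/
def gammaFn {N : ℕ} {X : Fin N → Type*} (K : (∀ i, X i) → ℝ) (φ : ∀ i, X i → ℝ)
    (x : ∀ i, X i) : ℝ :=
  K x * Real.exp (∑ j, φ j (x j))

/-- `T_i(φ)(x_i) = ∫_{X_{-i}} K(x_i, x_{-i}) exp(∑_j φ_j(x_j)) dm_{-i}(x_{-i})`.
Since every `m j` is a probability measure, integrating over the full product
(with the `i`-th coordinate replaced by `x_i` via `Function.update`) agrees with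
integrating over `∏_{j ≠ i} X_j`. -/
def schrT {N : ℕ} {X : Fin N → Type*} [∀ i, MeasurableSpace (X i)]
    (m : ∀ i, Measure (X i)) (K : (∀ i, X i) → ℝ) (φ : ∀ i, X i → ℝ)
    (i : Fin N) (xi : X i) : ℝ :=
  ∫ y, gammaFn K φ (Function.update y i xi) ∂Measure.pi m

/-- `L_{φ,i}(h)(x_i)`, the conditional-expectation type operator obtained by
linearizing the Schrödinger system. -/
def schrL {N : ℕ} {X : Fin N → Type*} [∀ i, MeasurableSpace (X i)]
    (m : ∀ i, Measure (X i)) (K : (∀ i, X i) → ℝ) (φ h : ∀ i, X i → ℝ)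
    (i : Fin N) (xi : X i) : ℝ :=
  (∫ y, gammaFn K φ (Function.update y i xi) *
      ∑ j ∈ Finset.univ.erase i, h j (Function.update y i xi j) ∂Measure.pi m) /
  (∫ y, gammaFn K φ (Function.update y i xi) ∂Measure.pi m)

/-- A tuple of essentially bounded measurable functions. -/
def BddTuple {N : ℕ} {X : Fin N → Type*} [∀ i, MeasurableSpace (X i)]
    (m : ∀ i, Measure (X i)) (φ : ∀ i, X i → ℝ) : Prop :=
  ∀ i, Measurable (φ i) ∧ MemLp (φ i) ⊤ (m i)

/-- Membership in `E`: essentially bounded measurable tuples with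
`∫ φ_i dm_i = 0` for `i = 1, …, N-1` (i.e. all but the last index). -/
def InE {N : ℕ} {X : Fin N → Type*} [∀ i, MeasurableSpace (X i)]
    (m : ∀ i, Measure (X i)) (φ : ∀ i, X i → ℝ) : Prop :=
  BddTuple m φ ∧ ∀ i : Fin N, (i : ℕ) < N - 1 → ∫ x, φ i x ∂m i = 0

/-- Membership in `F`: essentially bounded measurable tuples whose integrals all coincide. -/
def InF {N : ℕ} {X : Fin N → Type*} [∀ i, MeasurableSpace (X i)]
    (m : ∀ i, Measure (X i)) (μ : ∀ i, X i → ℝ) : Prop :=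
  BddTuple m μ ∧ ∀ i j, ∫ x, μ i x ∂m i = ∫ x, μ j x ∂m j

/-- Membership in `F_{++}`: members of `F` which are bounded away from `0`. -/
def InFpp {N : ℕ} {X : Fin N → Type*} [∀ i, MeasurableSpace (X i)]
    (m : ∀ i, Measure (X i)) (μ : ∀ i, X i → ℝ) : Prop :=
  InF m μ ∧ ∀ i, ∃ c : ℝ, 0 < c ∧ ∀ᵐ x ∂m i, c ≤ μ i x

/-- Membership in `F_{++,M}`: members of `F_{++}` with `1/M ≤ μ_i ≤ M` a.e. -/
def InFppM {N : ℕ} {X : Fin N → Type*} [∀ i, MeasurableSpace (X i)]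
    (m : ∀ i, Measure (X i)) (M : ℝ) (μ : ∀ i, X i → ℝ) : Prop :=
  InFpp m μ ∧ ∀ i, ∀ᵐ x ∂m i, 1 / M ≤ μ i x ∧ μ i x ≤ M

end

/-!
Write `S x = ∑ j, φ j (x j)`, so that `γ = K exp S`. Young's inequality
`L s ≤ s log (s / k) - s + k exp L` (for `s ≥ 0`, `k > 0`), applied pointwise with `L = S`,
`s = ρ`, `k = K`, gives `(log (ρ / K) - 1) ρ ≥ S ρ - γ`, with equality when `ρ = γ`.
Integrating, it remains to see `∫ S ρ = ∫ S γ`. Since `T_i(φ) = μ_i`, the measure `γ m` has the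
same one-dimensional marginals `μ_i m_i` as `ρ m`, and `S` is a sum of functions of one coordinate
each, so both integrals equal `∑ j, ∫ φ_j μ_j dm_j`.
-/

lemma mul_sub_mul_exp_le_log_div_sub_one_mul {s k : ℝ} (hs : 0 ≤ s) (hk : 0 < k) (L : ℝ) :
    L * s - k * Real.exp L ≤ (Real.log (s / k) - 1) * s := by
  rcases hs.eq_or_lt with rfl | hs
  · simpa using (mul_pos hk (Real.exp_pos L)).le
  have h := Real.add_one_le_exp (L - Real.log (s / k))
  rw [Real.exp_sub, Real.exp_log (div_pos hs hk), div_div_eq_mul_div] at h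
  have h' := mul_le_mul_of_nonneg_left h hs.le
  rw [mul_div_cancel₀ _ hs.ne'] at h'
  linarith

lemma le_abs_log_div_sub_one_mul_add {s k : ℝ} (hs : 0 ≤ s) (hk : 0 < k) :
    s ≤ |(Real.log (s / k) - 1) * s| + Real.exp 2 * k := by
  rcases le_or_gt s (Real.exp 2 * k) with h | h
  · linarith [abs_nonneg ((Real.log (s / k) - 1) * s)]
  · have hek : 0 < Real.exp 2 * k := mul_pos (Real.exp_pos 2) hk
    have hlog : 2 < Real.log (s / k) := by
      rwa [Real.lt_log_iff_exp_lt (div_pos (hek.trans h) hk), lt_div_iff₀ hk]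
    have : s ≤ (Real.log (s / k) - 1) * s := by nlinarith
    linarith [le_abs_self ((Real.log (s / k) - 1) * s)]

lemma integral_comp_mul_eq_integral_map_withDensity {α β : Type*} [MeasurableSpace α]
    [MeasurableSpace β] {μ : Measure α} {f : α → ℝ} (hf : Measurable f) (hf0 : 0 ≤ᵐ[μ] f)
    {π : α → β} (hπ : Measurable π) {φ : β → ℝ} (hφ : Measurable φ) :
    ∫ x, φ (π x) * f x ∂μ = ∫ y, φ y ∂(μ.withDensity fun x => ENNReal.ofReal (f x)).map π := by
  rw [integral_map hπ.aemeasurable hφ.aestronglyMeasurable,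
    integral_withDensity_eq_integral_toReal_smul hf.ennreal_ofReal
      (ae_of_all _ fun _ => ENNReal.ofReal_lt_top)]
  refine integral_congr_ae ?_
  filter_upwards [hf0] with x hx
  rw [ENNReal.toReal_ofReal hx, smul_eq_mul, mul_comm]

lemma integrable_of_integrable_log_div_sub_one_mul {α : Type*} [MeasurableSpace α]
    {μ : Measure α} [IsFiniteMeasure μ] {ρ K : α → ℝ} {b : ℝ} (hρ : AEStronglyMeasurable ρ μ)
    (hρ0 : 0 ≤ᵐ[μ] ρ) (hK : ∀ᵐ x ∂μ, 0 < K x ∧ K x ≤ b)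
    (hint : Integrable (fun x => (Real.log (ρ x / K x) - 1) * ρ x) μ) : Integrable ρ μ := by
  refine (hint.abs.add (integrable_const (Real.exp 2 * b))).mono' hρ ?_
  filter_upwards [hρ0, hK] with x hx hKx
  rw [Real.norm_of_nonneg hx]
  exact (le_abs_log_div_sub_one_mul_add hx hKx.1).trans
    (add_le_add_right (mul_le_mul_of_nonneg_left hKx.2 (Real.exp_pos 2).le) _)

section Pi

variable {ι : Type*} [Fintype ι] [DecidableEq ι] {X : ι → Type*} [∀ i, MeasurableSpace (X i)]
  (m : ∀ i, Measure (X i)) [∀ i, IsProbabilityMeasure (m i)]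

lemma measurePreserving_update_pi (j : ι) :
    MeasurePreserving (fun p : X j × (∀ i, X i) => Function.update p.2 j p.1)
      ((m j).prod (Measure.pi m)) (Measure.pi m) := by
  refine ⟨by fun_prop, (Measure.pi_eq fun s hs => ?_).symm⟩
  have hpre : (fun p : X j × (∀ i, X i) => Function.update p.2 j p.1) ⁻¹' Set.univ.pi s
      = s j ×ˢ Set.univ.pi (Function.update s j Set.univ) := by
    ext ⟨t, y⟩
    simp only [Set.mem_preimage, Set.mem_pi, Set.mem_univ, true_implies, Set.mem_prod]
    refine ⟨fun h => ⟨by simpa using h j, fun i => ?_⟩, fun ⟨ht, hy⟩ i => ?_⟩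
    · rcases eq_or_ne i j with rfl | hij
      · simp
      · simpa [hij] using h i
    · rcases eq_or_ne i j with rfl | hij
      · simpa using ht
      · simpa [hij] using hy i
  rw [Measure.map_apply (by fun_prop) (MeasurableSet.univ_pi hs), hpre, Measure.prod_prod,
    Measure.pi_pi, ← Finset.mul_prod_erase _ _ (Finset.mem_univ j)]
  simp only [Function.update_self, measure_univ, one_mul]
  rw [Finset.prod_congr rfl fun i hi => by rw [Function.update_of_ne (Finset.ne_of_mem_erase hi)]]
  exact Finset.mul_prod_erase _ (fun i => m i (s i)) (Finset.mem_univ j)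

lemma ae_ae_update_of_ae {p : (∀ i, X i) → Prop} (h : ∀ᵐ x ∂Measure.pi m, p x) (j : ι) :
    ∀ᵐ t ∂m j, ∀ᵐ y ∂Measure.pi m, p (Function.update y j t) :=
  Measure.ae_ae_of_ae_prod ((measurePreserving_update_pi m j).quasiMeasurePreserving.ae h)

lemma map_eval_withDensity_pi {f : (∀ i, X i) → ℝ≥0∞} (hf : Measurable f) (j : ι) :
    ((Measure.pi m).withDensity f).map (Function.eval j)
      = (m j).withDensity fun t => ∫⁻ y, f (Function.update y j t) ∂Measure.pi m := by
  ext A hA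
  have hA' : MeasurableSet (Function.eval j ⁻¹' A) := measurable_pi_apply j hA
  rw [Measure.map_apply (measurable_pi_apply j) hA, withDensity_apply _ hA',
    withDensity_apply _ hA, ← lintegral_indicator hA',
    ← lintegral_indicator hA, ← (measurePreserving_update_pi m j).lintegral_comp
      (hf.indicator hA'), lintegral_prod
      (fun p => (Function.eval j ⁻¹' A).indicator f (Function.update p.2 j p.1))
      ((hf.indicator hA').comp (measurePreserving_update_pi m j).measurable).aemeasurable]
  congr with t
  by_cases ht : t ∈ A <;> simp [ht]

end Pi

section Schrodinger

variable {N : ℕ} {X : Fin N → Type*} {K : (∀ i, X i) → ℝ} {φ : ∀ i, X i → ℝ}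

lemma log_gammaFn_div {x : ∀ i, X i} (hx : K x ≠ 0) :
    Real.log (gammaFn K φ x / K x) = ∑ j, φ j (x j) := by
  rw [gammaFn, mul_div_cancel_left₀ _ hx, Real.log_exp]

variable [∀ i, MeasurableSpace (X i)] {m : ∀ i, Measure (X i)}

lemma BddTuple.measurable_sum (hφ : BddTuple m φ) :
    Measurable fun x : ∀ i, X i => ∑ j, φ j (x j) :=
  Finset.measurable_sum _ fun j _ => (hφ j).1.comp (measurable_pi_apply j)

lemma measurable_gammaFn (hK : Measurable K) (hφ : BddTuple m φ) : Measurable (gammaFn K φ) :=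
  hK.mul (Real.measurable_exp.comp hφ.measurable_sum)

variable [∀ i, IsProbabilityMeasure (m i)]

lemma BddTuple.ae_norm_comp_eval_le (hφ : BddTuple m φ) (j : Fin N) :
    ∀ᵐ x ∂Measure.pi m, ‖φ j (x j)‖ ≤ lpNorm (φ j) ∞ (m j) :=
  (Measure.quasiMeasurePreserving_eval m j).ae (ae_le_lpNorm_exponent_top (hφ j).2)

lemma BddTuple.ae_norm_sum_le (hφ : BddTuple m φ) :
    ∀ᵐ x ∂Measure.pi m, ‖∑ j, φ j (x j)‖ ≤ ∑ j, lpNorm (φ j) ∞ (m j) := by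
  filter_upwards [ae_all_iff.2 hφ.ae_norm_comp_eval_le] with x hx
  exact (norm_sum_le _ _).trans (Finset.sum_le_sum fun j _ => hx j)

lemma BddTuple.ae_gammaFn_mem_Icc {b : ℝ} (hφ : BddTuple m φ)
    (hKb : ∀ᵐ x ∂Measure.pi m, 0 ≤ K x ∧ K x ≤ b) :
    ∀ᵐ x ∂Measure.pi m,
      gammaFn K φ x ∈ Set.Icc 0 (b * Real.exp (∑ j, lpNorm (φ j) ∞ (m j))) := by
  filter_upwards [hKb, hφ.ae_norm_sum_le] with x hKx hSx
  refine ⟨mul_nonneg hKx.1 (Real.exp_pos _).le, ?_⟩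
  exact mul_le_mul hKx.2 (Real.exp_le_exp.2 (le_of_abs_le hSx)) (Real.exp_pos _).le
    (hKx.1.trans hKx.2)

lemma BddTuple.integrable_gammaFn {b : ℝ} (hφ : BddTuple m φ) (hK : Measurable K)
    (hKb : ∀ᵐ x ∂Measure.pi m, 0 ≤ K x ∧ K x ≤ b) :
    Integrable (gammaFn K φ) (Measure.pi m) :=
  .of_bound (measurable_gammaFn hK hφ).aestronglyMeasurable _ <|
    (hφ.ae_gammaFn_mem_Icc hKb).mono fun _ hx => by rw [Real.norm_of_nonneg hx.1]; exact hx.2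

lemma BddTuple.map_eval_withDensity_gammaFn {b : ℝ} (hφ : BddTuple m φ) (hK : Measurable K)
    (hKb : ∀ᵐ x ∂Measure.pi m, 0 ≤ K x ∧ K x ≤ b) (j : Fin N) :
    ((Measure.pi m).withDensity fun x => ENNReal.ofReal (gammaFn K φ x)).map (Function.eval j)
      = (m j).withDensity fun t => ENNReal.ofReal (schrT m K φ j t) := by
  have hγ := measurable_gammaFn hK hφ
  rw [map_eval_withDensity_pi m hγ.ennreal_ofReal j]
  refine withDensity_congr_ae ?_
  filter_upwards [ae_ae_update_of_ae m (hφ.ae_gammaFn_mem_Icc hKb) j] with t ht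
  have hint : Integrable (fun y => gammaFn K φ (Function.update y j t)) (Measure.pi m) :=
    .of_bound (hγ.comp (measurable_update_left (a := j))).aestronglyMeasurable _ <|
      ht.mono fun _ hy => by rw [Real.norm_of_nonneg hy.1]; exact hy.2
  rw [schrT, ofReal_integral_eq_lintegral_ofReal hint (ht.mono fun _ hy => hy.1)]

lemma BddTuple.integral_sum_mul_eq_of_map_withDensity_eq (hφ : BddTuple m φ)
    {f g : (∀ i, X i) → ℝ} (hf : Integrable f (Measure.pi m)) (hg : Integrable g (Measure.pi m))
    (hfm : Measurable f) (hgm : Measurable g)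
    (hf0 : 0 ≤ᵐ[Measure.pi m] f) (hg0 : 0 ≤ᵐ[Measure.pi m] g)
    (hmap : ∀ j, ((Measure.pi m).withDensity fun x => ENNReal.ofReal (f x)).map (Function.eval j)
      = ((Measure.pi m).withDensity fun x => ENNReal.ofReal (g x)).map (Function.eval j)) :
    ∫ x, (∑ j, φ j (x j)) * f x ∂Measure.pi m = ∫ x, (∑ j, φ j (x j)) * g x ∂Measure.pi m := by
  have hφm : ∀ j, Measurable fun x : ∀ i, X i => φ j (x j) :=
    fun j => (hφ j).1.comp (measurable_pi_apply j)
  simp_rw [Finset.sum_mul]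
  rw [integral_finsetSum _ fun j _ => hf.bdd_mul (hφm j).aestronglyMeasurable
      (hφ.ae_norm_comp_eval_le j),
    integral_finsetSum _ fun j _ => hg.bdd_mul (hφm j).aestronglyMeasurable
      (hφ.ae_norm_comp_eval_le j)]
  refine Finset.sum_congr rfl fun j _ => ?_
  rw [integral_comp_mul_eq_integral_map_withDensity hfm hf0 (measurable_pi_apply j) (hφ j).1,
    integral_comp_mul_eq_integral_map_withDensity hgm hg0 (measurable_pi_apply j) (hφ j).1,
    hmap j]

end Schrodinger

theorem primal_optimality_general
    {N : ℕ} {X : Fin N → Type*} [∀ i, MeasurableSpace (X i)]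
    (m : ∀ i, MeasureTheory.Measure (X i)) [∀ i, MeasureTheory.IsProbabilityMeasure (m i)]
    (K : (∀ i, X i) → ℝ) (a b : ℝ) (ha : 0 < a)
    (hK : Measurable K) (hKb : ∀ᵐ x ∂MeasureTheory.Measure.pi m, a ≤ K x ∧ K x ≤ b)
    (μ : ∀ i, X i → ℝ)
    (φ : ∀ i, X i → ℝ) (hφ : BddTuple m φ) (hTφ : ∀ i, schrT m K φ i =ᵐ[m i] μ i)
    (ρ : (∀ i, X i) → ℝ) (hρm : Measurable ρ) (hρ0 : ∀ x, 0 ≤ ρ x)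
    (hmarg : ∀ i, MeasureTheory.Measure.map (fun x => x i)
        ((MeasureTheory.Measure.pi m).withDensity fun x => ENNReal.ofReal (ρ x)) =
      (m i).withDensity fun t => ENNReal.ofReal (μ i t))
    (hint : Integrable (fun x => (Real.log (ρ x / K x) - 1) * ρ x)
      (MeasureTheory.Measure.pi m)) :
    ∫ x, (Real.log (gammaFn K φ x / K x) - 1) * gammaFn K φ x ∂MeasureTheory.Measure.pi m ≤
      ∫ x, (Real.log (ρ x / K x) - 1) * ρ x ∂MeasureTheory.Measure.pi m := by
  set P := Measure.pi m
  have hKpos : ∀ᵐ x ∂P, 0 < K x ∧ K x ≤ b := hKb.mono fun x hx => ⟨ha.trans_le hx.1, hx.2⟩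
  have hKnonneg : ∀ᵐ x ∂P, 0 ≤ K x ∧ K x ≤ b := hKpos.mono fun x hx => ⟨hx.1.le, hx.2⟩
  have hγ : Integrable (gammaFn K φ) P := hφ.integrable_gammaFn hK hKnonneg
  have hρ : Integrable ρ P :=
    integrable_of_integrable_log_div_sub_one_mul hρm.aestronglyMeasurable (ae_of_all _ hρ0)
      hKpos hint
  have hSρ : Integrable (fun x => (∑ j, φ j (x j)) * ρ x) P :=
    hρ.bdd_mul hφ.measurable_sum.aestronglyMeasurable hφ.ae_norm_sum_le
  have hSγ : Integrable (fun x => (∑ j, φ j (x j)) * gammaFn K φ x) P :=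
    hγ.bdd_mul hφ.measurable_sum.aestronglyMeasurable hφ.ae_norm_sum_le
  have hsame_marginals : ∀ j, (P.withDensity fun x => ENNReal.ofReal (gammaFn K φ x)).map
      (Function.eval j) = (P.withDensity fun x => ENNReal.ofReal (ρ x)).map (Function.eval j) :=
    fun j => (hφ.map_eval_withDensity_gammaFn hK hKnonneg j).trans <|
      (withDensity_congr_ae ((hTφ j).mono fun t ht => by rw [ht])).trans (hmarg j).symm
  calc ∫ x, (Real.log (gammaFn K φ x / K x) - 1) * gammaFn K φ x ∂P
      = ∫ x, (∑ j, φ j (x j)) * gammaFn K φ x - gammaFn K φ x ∂P :=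
        integral_congr_ae <| hKpos.mono fun x hx => by
          dsimp only
          rw [log_gammaFn_div hx.1.ne', sub_one_mul]
    _ = ∫ x, (∑ j, φ j (x j)) * ρ x ∂P - ∫ x, gammaFn K φ x ∂P := by
        rw [integral_sub hSγ hγ, hφ.integral_sum_mul_eq_of_map_withDensity_eq hγ hρ
          (measurable_gammaFn hK hφ) hρm
          ((hφ.ae_gammaFn_mem_Icc hKnonneg).mono fun _ hx => hx.1) (ae_of_all _ hρ0)
          hsame_marginals]
    _ = ∫ x, (∑ j, φ j (x j)) * ρ x - gammaFn K φ x ∂P := (integral_sub hSρ hγ).symm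
    _ ≤ ∫ x, (Real.log (ρ x / K x) - 1) * ρ x ∂P :=
        integral_mono_ae (hSρ.sub hγ) hint <| hKpos.mono fun x hx =>
          mul_sub_mul_exp_le_log_div_sub_one_mul (hρ0 x) hx.1 _

/-- Primal optimality of the Schrödinger bridge: `q = γ m` with
`γ = K exp(∑ φ_j)` minimizes the relative entropy `H(·|Km)` among all measures
`ρ m` with marginals `μ_i m_i` (for which the entropy is defined; otherwise the
left-hand side is interpreted as `+∞` and the inequality is trivial). -/
theorem primal_optimality
    {N : ℕ} (hN : 2 ≤ N) {X : Fin N → Type*} [∀ i, MeasurableSpace (X i)]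
    (m : ∀ i, MeasureTheory.Measure (X i)) [∀ i, MeasureTheory.IsProbabilityMeasure (m i)]
    (K : (∀ i, X i) → ℝ) (a b : ℝ) (ha : 0 < a) (hab : a ≤ b)
    (hK : Measurable K) (hKb : ∀ᵐ x ∂MeasureTheory.Measure.pi m, a ≤ K x ∧ K x ≤ b)
    (μ : ∀ i, X i → ℝ) (hμ : BddTuple m μ)
    (φ : ∀ i, X i → ℝ) (hφ : BddTuple m φ) (hTφ : ∀ i, schrT m K φ i =ᵐ[m i] μ i)
    (ρ : (∀ i, X i) → ℝ) (hρm : Measurable ρ) (hρ0 : ∀ x, 0 ≤ ρ x)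
    (hmarg : ∀ i, MeasureTheory.Measure.map (fun x => x i)
        ((MeasureTheory.Measure.pi m).withDensity fun x => ENNReal.ofReal (ρ x)) =
      (m i).withDensity fun t => ENNReal.ofReal (μ i t))
    (hint : Integrable (fun x => (Real.log (ρ x / K x) - 1) * ρ x)
      (MeasureTheory.Measure.pi m)) :
    ∫ x, (Real.log (gammaFn K φ x / K x) - 1) * gammaFn K φ x ∂MeasureTheory.Measure.pi m ≤
      ∫ x, (Real.log (ρ x / K x) - 1) * ρ x ∂MeasureTheory.Measure.pi m :=
  primal_optimality_general m K a b ha hK hKb μ φ hφ hTφ ρ hρm hρ0 hmarg hint
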